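/- arXiv:1806.01969 — 3 statements merged into one kernel-verified Lean document; each statement's English description precedes it below -/
import Mathlib

section
/- Let X ∈ ℝ^{n×d} be full rank (n ≥ d) and d ≤ s ≤ n. If S is drawn by size-s volume sampling over X (P(S) ∝ det(X_S^⊤X_S)), then E[(I_S X)^+] = X^+, where I_S is the diagonal 0/1 matrix selecting the rows of S, and M^+ denotes the Moore–Penrose pseudoinverse. -/
open Matrix Finset

noncomputable section

/-- The submatrix of `X` consisting of the rows indexed by the subset `S`. -/
def rowSub {n d : ℕ} (X : Matrix (Fin n) (Fin d) ℝ) (S : Finset (Fin n)) :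
    Matrix {i // i ∈ S} (Fin d) ℝ :=
  X.submatrix (fun i => (i : Fin n)) id

/-- `X_S^⊤ X_S`. -/
def gram {n d : ℕ} (X : Matrix (Fin n) (Fin d) ℝ) (S : Finset (Fin n)) :
    Matrix (Fin d) (Fin d) ℝ :=
  (rowSub X S)ᵀ * rowSub X S

/-- The four Penrose conditions characterizing the Moore–Penrose pseudoinverse. -/
def IsMoorePenrose {m p : Type*} [Fintype m] [Fintype p]
    (A : Matrix m p ℝ) (B : Matrix p m ℝ) : Prop :=
  A * B * A = A ∧ B * A * B = B ∧ (A * B)ᵀ = A * B ∧ (B * A)ᵀ = B * A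

/-- The Moore–Penrose pseudoinverse `A⁺` of a real matrix. -/
def pinv {m p : Type*} [Fintype m] [Fintype p] (A : Matrix m p ℝ) : Matrix p m ℝ := by
  classical exact if h : ∃ B, IsMoorePenrose A B then h.choose else 0

/-- The diagonal 0/1 selection matrix `I_S`. -/
def sel {n : ℕ} (S : Finset (Fin n)) : Matrix (Fin n) (Fin n) ℝ :=
  Matrix.diagonal (fun i => if i ∈ S then 1 else 0)

/-!
If `det (AᵀA) ≠ 0` then `A⁺ = (AᵀA)⁻¹Aᵀ`, so `det (AᵀA) • A⁺ = adj (AᵀA) Aᵀ`; this also holds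
when `det (AᵀA) = 0`, because then `adj (AᵀA) Aᵀ = 0`. For `A = I_S X` the weighted summand is
therefore `adj (Xᵀ I_S X) Xᵀ I_S`, whose `(j, i)` entry is, by Cramer's rule, `det (Xᵀ I_S Y)`
where `Y` is `X` with its `j`-th column replaced by `e_i`. Expanding `det (Xᵀ I_S Y)`
multilinearly in its rows gives a sum over maps `f : Fin d → Fin n`; only injective `f`
contribute, and such an `f` is kept by exactly `C(n-d, s-d)` of the sets `S`. Hence
`∑_S det (Xᵀ I_S Y) = C(n-d, s-d) det (XᵀY)`, and the weighted sum of pseudoinverses is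
`C(n-d, s-d) adj (XᵀX) Xᵀ = C(n-d, s-d) det (XᵀX) X⁺`.
-/

theorem IsMoorePenrose.unique {m p : Type*} [Fintype m] [Fintype p] {A : Matrix m p ℝ}
    {B C : Matrix p m ℝ} (hB : IsMoorePenrose A B) (hC : IsMoorePenrose A C) : B = C := by
  obtain ⟨hB1, hB2, hB3, hB4⟩ := hB
  obtain ⟨hC1, hC2, hC3, hC4⟩ := hC
  have hAB : A * B = A * C :=
    calc A * B = (A * C * A * B)ᵀ := by rw [hC1, hB3]
    _ = (A * B)ᵀ * (A * C)ᵀ := by rw [← transpose_mul, Matrix.mul_assoc (A * C)]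
    _ = A * C := by rw [hB3, hC3, ← Matrix.mul_assoc, hB1]
  have hBA : B * A = C * A :=
    calc B * A = (B * (A * C * A))ᵀ := by rw [hC1, hB4]
    _ = (C * A)ᵀ * (B * A)ᵀ := by
      rw [← transpose_mul, ← Matrix.mul_assoc, ← Matrix.mul_assoc, Matrix.mul_assoc (B * A)]
    _ = C * A := by rw [hC4, hB4, Matrix.mul_assoc, ← Matrix.mul_assoc A, hB1]
  calc B = B * A * B := hB2.symm
  _ = C * A * C := by rw [Matrix.mul_assoc, hAB, ← Matrix.mul_assoc, hBA]
  _ = C := hC2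

theorem pinv_eq_of_isMoorePenrose {m p : Type*} [Fintype m] [Fintype p] {A : Matrix m p ℝ}
    {B : Matrix p m ℝ} (h : IsMoorePenrose A B) : pinv A = B := by
  have hex : ∃ B, IsMoorePenrose A B := ⟨B, h⟩
  rw [pinv, dif_pos hex]
  exact hex.choose_spec.unique h

section Pinv

variable {m p : Type*} [Fintype m] [Fintype p] [DecidableEq p]

theorem isMoorePenrose_inv_mul_transpose {A : Matrix m p ℝ} (h : (Aᵀ * A).det ≠ 0) :
    IsMoorePenrose A ((Aᵀ * A)⁻¹ * Aᵀ) := by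
  have hleft : (Aᵀ * A)⁻¹ * Aᵀ * A = 1 := by
    rw [Matrix.mul_assoc, nonsing_inv_mul _ (isUnit_iff_ne_zero.2 h)]
  have hsymm : ((Aᵀ * A)⁻¹)ᵀ = (Aᵀ * A)⁻¹ := by
    rw [transpose_nonsing_inv, transpose_mul, transpose_transpose]
  refine ⟨?_, ?_, ?_, ?_⟩
  · rw [Matrix.mul_assoc, hleft, Matrix.mul_one]
  · rw [hleft, Matrix.one_mul]
  · rw [← Matrix.mul_assoc, transpose_mul, transpose_mul, hsymm, transpose_transpose,
      Matrix.mul_assoc]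
  · rw [hleft, transpose_one]

theorem adjugate_transpose_mul_self_mul_transpose_eq_zero {A : Matrix m p ℝ}
    (h : (Aᵀ * A).det = 0) : (Aᵀ * A).adjugate * Aᵀ = 0 := by
  have := (mul_self_mul_conjTranspose_eq_zero Aᵀ (Aᵀ * A).adjugate).1
  rw [conjTranspose_eq_transpose_of_trivial, transpose_transpose] at this
  exact this (by rw [adjugate_mul, h, zero_smul])

theorem det_transpose_mul_self_smul_pinv (A : Matrix m p ℝ) :
    (Aᵀ * A).det • pinv A = (Aᵀ * A).adjugate * Aᵀ := by
  by_cases h : (Aᵀ * A).det = 0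
  · rw [h, zero_smul, adjugate_transpose_mul_self_mul_transpose_eq_zero h]
  · rw [pinv_eq_of_isMoorePenrose (isMoorePenrose_inv_mul_transpose h), Matrix.inv_def,
      Ring.inverse_eq_inv', smul_mul, smul_smul, mul_inv_cancel₀ h, one_smul]

end Pinv

theorem isUnit_of_rank_eq_card {K k : Type*} [Field K] [Fintype k] [DecidableEq k]
    {A : Matrix k k K} (h : A.rank = Fintype.card k) : IsUnit A := by
  refine mulVec_surjective_iff_isUnit.1 (LinearMap.range_eq_top (f := A.mulVecLin) |>.1 ?_)
  exact Submodule.eq_top_of_finrank_eq (by rw [← rank, h, Module.finrank_fintype_fun_eq_card])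

theorem det_mul_eq_sum_prod_mul_det_submatrix {R k m : Type*} [CommRing R] [Fintype k]
    [DecidableEq k] [Fintype m] (A : Matrix k m R) (B : Matrix m k R) :
    (A * B).det = ∑ f : k → m, (∏ i, A i (f i)) * (B.submatrix f id).det := by
  have hrows : A * B = fun i => ∑ j, A i j • B j := by
    ext i l
    simp [mul_apply, Finset.sum_apply]
  change detRowAlternating.toMultilinearMap (A * B) = _
  rw [hrows, MultilinearMap.map_sum]
  refine sum_congr rfl fun f _ => ?_
  rw [MultilinearMap.map_smul_univ, smul_eq_mul]
  rfl

section Selection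

variable {n : ℕ}

theorem sel_transpose (S : Finset (Fin n)) : (sel S)ᵀ = sel S :=
  diagonal_transpose _

theorem sel_mul_self (S : Finset (Fin n)) : sel S * sel S = sel S := by
  rw [sel, diagonal_mul_diagonal]
  congr 1
  ext i
  split_ifs <;> norm_num

theorem transpose_mul_sel_apply {d : ℕ} (X : Matrix (Fin n) (Fin d) ℝ) (S : Finset (Fin n))
    (k : Fin d) (i : Fin n) : (Xᵀ * sel S) k i = if i ∈ S then X i k else 0 := by
  simp [sel, mul_diagonal]

theorem gram_eq_transpose_mul_sel_mul {d : ℕ} (X : Matrix (Fin n) (Fin d) ℝ)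
    (S : Finset (Fin n)) : gram X S = Xᵀ * sel S * X := by
  ext k l
  rw [mul_apply]
  simp only [transpose_mul_sel_apply, ite_mul, zero_mul, sum_ite_mem, univ_inter]
  exact sum_coe_sort S fun i => X i k * X i l

theorem transpose_mul_self_sel_mul {d : ℕ} (X : Matrix (Fin n) (Fin d) ℝ) (S : Finset (Fin n)) :
    (sel S * X)ᵀ * (sel S * X) = Xᵀ * sel S * X := by
  rw [transpose_mul, sel_transpose, Matrix.mul_assoc, ← Matrix.mul_assoc (sel S), sel_mul_self,
    Matrix.mul_assoc]

end Selection

theorem card_filter_powersetCard_forall_mem {n d s : ℕ} (hds : d ≤ s) {f : Fin d → Fin n}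
    (hf : Function.Injective f) :
    #{S ∈ powersetCard s univ | ∀ i, f i ∈ S} = (n - d).choose (s - d) := by
  have hcard : #(univ.image f) = d := by simp [card_image_of_injective _ hf]
  have := card_filter_powersetCard_subset (univ.image f) univ s (subset_univ _) (by rwa [hcard])
  simpa only [image_subset_iff, mem_univ, true_implies, card_univ, Fintype.card_fin,
    hcard] using this

theorem sum_det_transpose_mul_sel_mul {n d s : ℕ} (hds : d ≤ s)
    (X Y : Matrix (Fin n) (Fin d) ℝ) :
    ∑ S ∈ powersetCard s (univ : Finset (Fin n)), (Xᵀ * sel S * Y).det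
      = ((n - d).choose (s - d) : ℝ) * (Xᵀ * Y).det := by
  simp only [det_mul_eq_sum_prod_mul_det_submatrix, transpose_mul_sel_apply, mul_sum]
  rw [sum_comm]
  refine sum_congr rfl fun f _ => ?_
  by_cases hf : Function.Injective f
  · simp only [Fintype.prod_ite_zero, ite_mul, zero_mul, ← sum_filter, sum_const,
      card_filter_powersetCard_forall_mem hds hf, nsmul_eq_mul, transpose_apply]
  · obtain ⟨i, j, hfij, hij⟩ := Function.not_injective_iff.1 hf
    have hzero : (Y.submatrix f id).det = 0 :=
      det_zero_of_row_eq hij (by ext; simp [hfij])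
    simp [hzero]

theorem adjugate_mul_mul_apply {R k m : Type*} [CommRing R] [Fintype k] [DecidableEq k]
    [Fintype m] [DecidableEq m] (A : Matrix k m R) (B : Matrix m k R) (j : k) (i : m) :
    ((A * B).adjugate * A) j i = (A * B.updateCol j (Pi.single i 1)).det := by
  rw [mul_updateCol, ← cramer_apply, cramer_eq_adjugate_mulVec, mulVec_mulVec,
    mulVec_single_one, col_apply]

theorem sum_adjugate_mul_transpose_mul_sel {n d s : ℕ} (hds : d ≤ s)
    (X : Matrix (Fin n) (Fin d) ℝ) :
    ∑ S ∈ powersetCard s (univ : Finset (Fin n)), (Xᵀ * sel S * X).adjugate * (Xᵀ * sel S)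
      = ((n - d).choose (s - d) : ℝ) • ((Xᵀ * X).adjugate * Xᵀ) := by
  ext j i
  rw [Matrix.sum_apply, Matrix.smul_apply, smul_eq_mul]
  simp only [adjugate_mul_mul_apply]
  exact sum_det_transpose_mul_sel_mul hds _ _

theorem volume_sampling_pinv_unbiased_general {n d : ℕ} (X : Matrix (Fin n) (Fin d) ℝ)
    (hrank : X.rank = d) (s : ℕ) (hds : d ≤ s) (hsn : s ≤ n) :
    ∑ S ∈ Finset.powersetCard s (Finset.univ : Finset (Fin n)),
        ((gram X S).det / (((n - d).choose (s - d) : ℝ) * (Xᵀ * X).det)) • pinv (sel S * X)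
      = pinv X := by
  have hC : ((n - d).choose (s - d) : ℝ) ≠ 0 := Nat.cast_ne_zero.2 (Nat.choose_pos (by omega)).ne'
  have hG : (Xᵀ * X).det ≠ 0 := by
    refine ((isUnit_iff_isUnit_det _).1 (isUnit_of_rank_eq_card ?_)).ne_zero
    rw [rank_transpose_mul_self, hrank, Fintype.card_fin]
  have hterm (S : Finset (Fin n)) :
      (gram X S).det • pinv (sel S * X) = (Xᵀ * sel S * X).adjugate * (Xᵀ * sel S) := by
    rw [gram_eq_transpose_mul_sel_mul, ← transpose_mul_self_sel_mul,
      det_transpose_mul_self_smul_pinv, transpose_mul, sel_transpose]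
  calc _ = (((n - d).choose (s - d) : ℝ) * (Xᵀ * X).det)⁻¹ •
        ∑ S ∈ powersetCard s (univ : Finset (Fin n)), (gram X S).det • pinv (sel S * X) := by
        simp only [smul_sum, smul_smul, div_eq_inv_mul]
  _ = (((n - d).choose (s - d) : ℝ) * (Xᵀ * X).det)⁻¹ •
        (((n - d).choose (s - d) : ℝ) * (Xᵀ * X).det) • pinv X := by
        rw [mul_smul _ (Xᵀ * X).det, det_transpose_mul_self_smul_pinv,
          ← sum_adjugate_mul_transpose_mul_sel hds]
        simp only [hterm]
  _ = pinv X := by rw [smul_smul, inv_mul_cancel₀ (mul_ne_zero hC hG), one_smul]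

/-- Unbiasedness of the pseudoinverse estimator under size-`s` volume sampling:
`E[(I_S X)⁺] = X⁺`. -/
theorem volume_sampling_pinv_unbiased {n d : ℕ} (X : Matrix (Fin n) (Fin d) ℝ)
    (hrank : X.rank = d) (hdn : d ≤ n) (s : ℕ) (hds : d ≤ s) (hsn : s ≤ n) :
    ∑ S ∈ Finset.powersetCard s (Finset.univ : Finset (Fin n)),
        ((gram X S).det / (((n - d).choose (s - d) : ℝ) * (Xᵀ * X).det)) • pinv (sel S * X)
      = pinv X :=
  volume_sampling_pinv_unbiased_general X hrank s hds hsn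
end
end

section
/- Let X ∈ ℝ^{n×d} be full rank, y ∈ ℝ^n, and i ∈ {1..n} such that w*(−i) minimizing ‖X_{−i}w − y_{−i}‖² exists (picking any minimizer). Then det(X^⊤X)·(L(w*(−i)) − L(w*)) = (det(X^⊤X) − det(X_{−i}^⊤X_{−i})) · (x_i^⊤ w*(−i) − y_i)², where L(w) = ‖Xw − y‖², w* = argmin L, and X_{−i}, y_{−i} omit row/entry i. -/
/-!
Let `A = XᵀX`, invertible by the rank assumption, and `r = xᵢᵀw*(−i) − yᵢ`. The normal equations
`Xᵀ(Xw* − y) = 0` and `X_{−i}ᵀ(X_{−i}w*(−i) − y_{−i}) = 0` give `A (w*(−i) − w*) = r xᵢ`.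
Expanding the quadratic loss around its minimizer `w*` then gives
`L(w*(−i)) − L(w*) = r² xᵢᵀA⁻¹xᵢ`, while `X_{−i}ᵀX_{−i} = A − xᵢxᵢᵀ` and the matrix determinant
lemma give `det(X_{−i}ᵀX_{−i}) = det A (1 − xᵢᵀA⁻¹xᵢ)`.
-/

open Matrix Finset

noncomputable section

/-- The total square loss `L(w) = ‖Xw − y‖²`. -/
def loss {n d : ℕ} (X : Matrix (Fin n) (Fin d) ℝ) (y : Fin n → ℝ) (w : Fin d → ℝ) : ℝ :=
  ∑ j, (X.mulVec w j - y j) ^ 2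

namespace Matrix

variable {m n K : Type*} [Fintype n] [DecidableEq n]

theorem isUnit_det_of_rank_eq_card [Field K] {A : Matrix n n K}
    (h : A.rank = Fintype.card n) : IsUnit A.det := by
  rw [← isUnit_iff_isUnit_det, ← mulVec_surjective_iff_isUnit]
  exact LinearMap.range_eq_top.mp
    (Submodule.eq_top_of_finrank_eq (h.trans (Module.finrank_fintype_fun_eq_card K).symm))

theorem det_add_vecMulVec [CommRing K] {A : Matrix n n K} (hA : IsUnit A.det) (u v : n → K) :
    (A + vecMulVec u v).det = A.det * (1 + v ⬝ᵥ A⁻¹ *ᵥ u) := by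
  rw [vecMulVec_eq Unit, det_add_replicateCol_mul_replicateRow hA, Matrix.mul_assoc,
    ← replicateCol_mulVec, det_unique (1 + _), add_apply, one_apply_eq,
    replicateRow_mul_replicateCol_apply]

theorem sum_residual_smul_row_eq_zero (X : Matrix m n ℝ) (y : m → ℝ) (S : Finset m)
    (w : n → ℝ)
    (hw : ∀ v, ∑ j ∈ S, ((X *ᵥ w) j - y j) ^ 2 ≤ ∑ j ∈ S, ((X *ᵥ v) j - y j) ^ 2) :
    ∑ j ∈ S, (X *ᵥ w - y) j • X j = 0 := by
  ext k
  set c := ∑ j ∈ S, X j k * ((X *ᵥ w) j - y j)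
  -- Moving from `w` to `w + t eₖ` raises the loss on `S` by a quadratic in `t` without constant
  -- term; being nonnegative, it has discriminant `(2c)² ≤ 0`.
  have hquad : ∀ t : ℝ, 0 ≤ (∑ j ∈ S, X j k ^ 2) * (t * t) + 2 * c * t + 0 := by
    intro t
    have expand : ∑ j ∈ S, ((X *ᵥ w) j + t * X j k - y j) ^ 2
        = ∑ j ∈ S, ((X *ᵥ w) j - y j) ^ 2 + ((∑ j ∈ S, X j k ^ 2) * (t * t) + 2 * c * t) := by
      simp only [c, Finset.sum_mul, Finset.mul_sum, ← Finset.sum_add_distrib]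
      exact Finset.sum_congr rfl fun j _ => by ring
    have := hw (w + t • Pi.single k 1)
    simp only [mulVec_add, mulVec_smul, mulVec_single_one, Pi.add_apply, Pi.smul_apply, col_apply,
      smul_eq_mul, expand] at this
    linarith
  have hc : (2 * c) ^ 2 = 0 :=
    le_antisymm (by simpa [discrim] using discrim_le_zero hquad) (sq_nonneg _)
  simpa [c, Finset.sum_apply, mul_comm] using hc

variable [Fintype m]

theorem transpose_mulVec_residual_eq_zero (X : Matrix m n ℝ) (y : m → ℝ) (w : n → ℝ)
    (hw : ∀ v, ∑ j, ((X *ᵥ w) j - y j) ^ 2 ≤ ∑ j, ((X *ᵥ v) j - y j) ^ 2) :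
    Xᵀ *ᵥ (X *ᵥ w - y) = 0 := by
  rw [mulVec_transpose, vecMul_eq_sum]
  exact sum_residual_smul_row_eq_zero X y univ w hw

theorem transpose_mulVec_residual_eq_of_erase [DecidableEq m] (X : Matrix m n ℝ) (y : m → ℝ)
    (i : m) (w : n → ℝ)
    (hw : ∀ v, ∑ j ∈ univ.erase i, ((X *ᵥ w) j - y j) ^ 2
      ≤ ∑ j ∈ univ.erase i, ((X *ᵥ v) j - y j) ^ 2) :
    Xᵀ *ᵥ (X *ᵥ w - y) = (X *ᵥ w - y) i • X i := by
  rw [mulVec_transpose, vecMul_eq_sum, ← sum_erase_add _ _ (mem_univ i),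
    sum_residual_smul_row_eq_zero X y _ w hw, zero_add]

end Matrix

theorem gram_apply_eq_sum {n d : ℕ} (X : Matrix (Fin n) (Fin d) ℝ) (S : Finset (Fin n))
    (j k : Fin d) :
    gram X S j k = ∑ l ∈ S, X l j * X l k := by
  simp only [_root_.gram, rowSub, mul_apply, transpose_apply, submatrix_apply, id]
  exact sum_coe_sort S fun l => X l j * X l k

theorem gram_univ_erase {n d : ℕ} (X : Matrix (Fin n) (Fin d) ℝ) (i : Fin n) :
    gram X (univ.erase i) = Xᵀ * X - vecMulVec (X i) (X i) := by
  ext j k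
  rw [gram_apply_eq_sum, Matrix.sub_apply, mul_apply, vecMulVec_apply,
    ← sum_erase_add _ _ (mem_univ i)]
  simp only [transpose_apply]
  ring

theorem loss_eq_dotProduct {n d : ℕ} (X : Matrix (Fin n) (Fin d) ℝ) (y : Fin n → ℝ)
    (w : Fin d → ℝ) : loss X y w = (X *ᵥ w - y) ⬝ᵥ (X *ᵥ w - y) := by
  simp [loss, dotProduct, sq]

theorem loss_add {n d : ℕ} (X : Matrix (Fin n) (Fin d) ℝ) (y : Fin n → ℝ) (w δ : Fin d → ℝ) :
    loss X y (w + δ) =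
      loss X y w + 2 * (δ ⬝ᵥ Xᵀ *ᵥ (X *ᵥ w - y)) + δ ⬝ᵥ (Xᵀ * X) *ᵥ δ := by
  have hres : X *ᵥ (w + δ) - y = (X *ᵥ w - y) + X *ᵥ δ := by rw [mulVec_add]; abel
  rw [loss_eq_dotProduct, loss_eq_dotProduct, hres, ← mulVec_mulVec, dotProduct_mulVec,
    dotProduct_mulVec, vecMul_transpose, add_dotProduct, dotProduct_add, dotProduct_add,
    dotProduct_comm (X *ᵥ δ) (X *ᵥ w - y)]
  ring

/-- Leave-one-out loss identity:
`det(X^⊤X)(L(w*(−i)) − L(w*)) = (det(X^⊤X) − det(X_{−i}^⊤X_{−i})) (x_i^⊤w*(−i) − y_i)²`. -/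
theorem leave_one_out_loss {n d : ℕ} (X : Matrix (Fin n) (Fin d) ℝ) (y : Fin n → ℝ)
    (hrank : X.rank = d) (i : Fin n) (w wi : Fin d → ℝ)
    (hw : ∀ v, loss X y w ≤ loss X y v)
    (hwi : ∀ v, ∑ j ∈ Finset.univ.erase i, (X.mulVec wi j - y j) ^ 2
              ≤ ∑ j ∈ Finset.univ.erase i, (X.mulVec v j - y j) ^ 2) :
    (Xᵀ * X).det * (loss X y wi - loss X y w)
      = ((Xᵀ * X).det - (gram X (Finset.univ.erase i)).det) * (X.mulVec wi i - y i) ^ 2 := by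
  set A := Xᵀ * X
  set r := X.mulVec wi i - y i
  have hA : IsUnit A.det :=
    isUnit_det_of_rank_eq_card (by rw [rank_transpose_mul_self, hrank, Fintype.card_fin])
  have hnormal := transpose_mulVec_residual_eq_zero X y w hw
  have hshift : A *ᵥ (wi - w) = r • X i := by
    rw [← mulVec_mulVec, mulVec_sub, ← sub_sub_sub_cancel_right _ _ y, mulVec_sub, hnormal,
      transpose_mulVec_residual_eq_of_erase X y i wi hwi, sub_zero]
    rfl
  have hdiff : wi - w = r • A⁻¹ *ᵥ X i := by
    rw [← mulVec_smul, ← hshift, mulVec_mulVec, nonsing_inv_mul _ hA, one_mulVec]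
  have hloss : loss X y wi - loss X y w = r ^ 2 * (X i ⬝ᵥ A⁻¹ *ᵥ X i) := by
    have := loss_add X y w (wi - w)
    rw [add_sub_cancel, hnormal, dotProduct_zero, hshift, hdiff, smul_dotProduct,
      dotProduct_smul, dotProduct_comm] at this
    rw [this, smul_eq_mul, smul_eq_mul]
    ring
  have hdet : (gram X (univ.erase i)).det = A.det * (1 - X i ⬝ᵥ A⁻¹ *ᵥ X i) := by
    rw [gram_univ_erase, sub_eq_add_neg, ← neg_vecMulVec, det_add_vecMulVec hA, mulVec_neg,
      dotProduct_neg, ← sub_eq_add_neg]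
  rw [hloss, hdet]
  ring
end
end

section
/- Let d ≥ 1, n divisible by d, X ∈ ℝ^{n×d} consist of n/d stacked copies of the d×d identity matrix, σ > 0, w̃ = σ·1 ∈ ℝ^d, and y = Xw̃ + ξ with Var[ξ] = σ²I, E[ξ] = 0. Then for any subset S ⊆ {1..n} of size s and λ = 1, the ridge estimator w_λ*(S) = (X_S^⊤X_S + I)^{−1}X_S^⊤y_S satisfies E_ξ[(1/n)‖X(w_λ*(S) − w̃)‖²] = (σ²/d)·Σ_{i=1}^d 1/(s_i + 1) ≥ σ²d/(s + d), where s_i is the number of rows of X_S equal to e_i. -/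
/-!
`X_Sᵀ X_S` is diagonal with entries `s_i`, so the ridge estimate decouples coordinatewise: its
`i`-th coordinate is `(s_i σ + T_i) / (s_i + 1)`, where `T_i` is the total noise on the `s_i`
selected copies of `e_i`. The prediction error on each of the `m` rows of `X` equal to `e_i` is
therefore `(T_i - σ) / (s_i + 1)`, with second moment `(s_i σ² + σ²) / (s_i + 1)² = σ² / (s_i + 1)`.
The lower bound is Sedrakyan's form of Cauchy–Schwarz, `d² / Σ (s_i + 1) ≤ Σ 1 / (s_i + 1)`,
together with `Σ s_i = s`.
-/

open Matrix Finset

noncomputable section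

open MeasureTheory

/-- The matrix consisting of `m` stacked copies of the `d × d` identity matrix:
row `k` equals the standard basis vector `e_{k mod d}`. -/
def Xstack (m d : ℕ) : Matrix (Fin (m * d)) (Fin d) ℝ :=
  Matrix.of fun k j => if (k : ℕ) % d = (j : ℕ) then 1 else 0

lemma Matrix.inv_diagonal_of_ne_zero {n K : Type*} [Fintype n] [DecidableEq n] [Field K]
    {v : n → K} (hv : ∀ i, v i ≠ 0) : (diagonal v)⁻¹ = diagonal fun i => (v i)⁻¹ := by
  refine inv_eq_right_inv ?_
  rw [diagonal_mul_diagonal, ← diagonal_one]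
  exact congrArg diagonal (funext fun i => mul_inv_cancel₀ (hv i))

lemma rowSub_transpose_mulVec {n d : ℕ} (X : Matrix (Fin n) (Fin d) ℝ) (S : Finset (Fin n))
    (v : Fin n → ℝ) (j : Fin d) :
    ((rowSub X S)ᵀ *ᵥ fun p : S => v p) j = ∑ k ∈ S, X k j * v k := by
  simp only [mulVec, dotProduct, rowSub, transpose_apply, submatrix_apply, id_eq]
  exact S.sum_coe_sort fun k => X k j * v k

lemma gram_apply {n d : ℕ} (X : Matrix (Fin n) (Fin d) ℝ) (S : Finset (Fin n)) (i j : Fin d) :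
    _root_.gram X S i j = ∑ k ∈ S, X k i * X k j := by
  simp only [_root_.gram, mul_apply, rowSub, transpose_apply, submatrix_apply, id_eq]
  exact S.sum_coe_sort fun k => X k i * X k j

lemma Fin.sum_modNat {M : Type*} [AddCommMonoid M] {m d : ℕ} (g : Fin d → M) :
    ∑ k : Fin (m * d), g k.modNat = m • ∑ i, g i := by
  refine (finProdFinEquiv.symm.sum_comp fun p => g p.2).trans ?_
  simp [Fintype.sum_prod_type]

section Xstack

variable {m d : ℕ}

/-- The rows of `X_S` equal to `e_i`; the paper's `s_i` is its cardinality. -/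
def modFiber (S : Finset (Fin (m * d))) (i : Fin d) : Finset (Fin (m * d)) :=
  S.filter fun k => k.val % d = i.val

lemma mem_modFiber {S : Finset (Fin (m * d))} {i : Fin d} {k : Fin (m * d)} :
    k ∈ modFiber S i ↔ k ∈ S ∧ k.modNat = i := by
  simp [modFiber, Fin.ext_iff, Fin.modNat]

lemma Xstack_apply (k : Fin (m * d)) (j : Fin d) :
    Xstack m d k j = if k.modNat = j then 1 else 0 := by
  simp [Xstack, Fin.ext_iff, Fin.modNat]

lemma Xstack_mulVec (v : Fin d → ℝ) (k : Fin (m * d)) : (Xstack m d *ᵥ v) k = v k.modNat := by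
  simp [mulVec, dotProduct, Xstack_apply]

lemma rowSub_Xstack_transpose_mulVec (S : Finset (Fin (m * d))) (v : Fin (m * d) → ℝ)
    (i : Fin d) :
    ((rowSub (Xstack m d) S)ᵀ *ᵥ fun p : S => v p) i = ∑ k ∈ modFiber S i, v k := by
  rw [rowSub_transpose_mulVec, modFiber, sum_filter]
  simp only [Xstack, of_apply, ite_mul, one_mul, zero_mul]

lemma gram_Xstack (S : Finset (Fin (m * d))) :
    _root_.gram (Xstack m d) S = diagonal fun i => (#(modFiber S i) : ℝ) := by
  ext i j
  rw [gram_apply, diagonal_apply]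
  simp only [Xstack, of_apply, boole_mul]
  split_ifs with hij
  · subst hij
    simp only [← ite_and, and_self, sum_boole, modFiber]
  · refine sum_eq_zero fun k _ => ?_
    split_ifs with hi hj <;> first | rfl | exact absurd (Fin.ext (hi.symm.trans hj)) hij

lemma sum_card_modFiber (S : Finset (Fin (m * d))) : ∑ i, #(modFiber S i) = #S := by
  rw [card_eq_sum_card_fiberwise (f := Fin.modNat) (t := univ) fun _ _ => mem_univ _]
  exact sum_congr rfl fun i _ => congrArg card (ext fun k => by simp [mem_modFiber])

lemma inv_gram_Xstack_add_one (S : Finset (Fin (m * d))) :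
    (_root_.gram (Xstack m d) S + 1)⁻¹ = diagonal fun i => ((#(modFiber S i) : ℝ) + 1)⁻¹ := by
  rw [gram_Xstack, ← diagonal_one, diagonal_add]
  exact inv_diagonal_of_ne_zero fun i => by positivity

lemma Xstack_ridge_error (S : Finset (Fin (m * d))) (w : Fin d → ℝ) (e : Fin (m * d) → ℝ)
    (k : Fin (m * d)) :
    (Xstack m d *ᵥ ((_root_.gram (Xstack m d) S + 1)⁻¹ *ᵥ
        ((rowSub (Xstack m d) S)ᵀ *ᵥ fun p : S => (Xstack m d *ᵥ w) p + e p))) k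
        - (Xstack m d *ᵥ w) k
      = (∑ l ∈ modFiber S k.modNat, e l - w k.modNat) / (#(modFiber S k.modNat) + 1) := by
  have hfit : ∀ i, ((rowSub (Xstack m d) S)ᵀ *ᵥ fun p : S => (Xstack m d *ᵥ w) p + e p) i
      = #(modFiber S i) * w i + ∑ l ∈ modFiber S i, e l := by
    intro i
    rw [rowSub_Xstack_transpose_mulVec _ (fun l => (Xstack m d *ᵥ w) l + e l), sum_add_distrib]
    have hw : ∀ l ∈ modFiber S i, (Xstack m d *ᵥ w) l = w i := fun l hl => by
      rw [Xstack_mulVec, (mem_modFiber.1 hl).2]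
    rw [sum_congr rfl hw, sum_const, nsmul_eq_mul]
  rw [Xstack_mulVec, Xstack_mulVec, inv_gram_Xstack_add_one, mulVec_diagonal, hfit]
  field_simp
  ring

end Xstack

section Noise

variable {ι Ω : Type*} [MeasurableSpace Ω] {μ : Measure Ω} {ξ : Ω → ι → ℝ}

lemma integrable_sum_sub_sq [IsFiniteMeasure μ] (hint1 : ∀ i, Integrable (fun ω => ξ ω i) μ)
    (hint2 : ∀ i j, Integrable (fun ω => ξ ω i * ξ ω j) μ) (F : Finset ι) (c : ℝ) :
    Integrable (fun ω => (∑ k ∈ F, ξ ω k - c) ^ 2) μ := by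
  simp_rw [sub_sq, sq, sum_mul_sum]
  exact (((integrable_finsetSum _ fun k _ => integrable_finsetSum _ fun l _ => hint2 k l).sub
    ((integrable_finsetSum _ fun k _ => hint1 k).const_mul 2 |>.mul_const c)).add
    (integrable_const _))

lemma integral_sum_sub_sq [IsProbabilityMeasure μ] [DecidableEq ι] {σ : ℝ}
    (hint1 : ∀ i, Integrable (fun ω => ξ ω i) μ)
    (hint2 : ∀ i j, Integrable (fun ω => ξ ω i * ξ ω j) μ)
    (hmean : ∀ i, ∫ ω, ξ ω i ∂μ = 0)
    (hvar : ∀ i j, (∫ ω, ξ ω i * ξ ω j ∂μ) = if i = j then σ ^ 2 else 0)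
    (F : Finset ι) (c : ℝ) :
    ∫ ω, (∑ k ∈ F, ξ ω k - c) ^ 2 ∂μ = #F * σ ^ 2 + c ^ 2 := by
  have hsq : Integrable (fun ω => ∑ k ∈ F, ∑ l ∈ F, ξ ω k * ξ ω l) μ :=
    integrable_finsetSum _ fun k _ => integrable_finsetSum _ fun l _ => hint2 k l
  have hlin : Integrable (fun ω => 2 * (∑ k ∈ F, ξ ω k) * c) μ :=
    (integrable_finsetSum _ fun k _ => hint1 k).const_mul 2 |>.mul_const c
  have hsecond : ∫ ω, ∑ k ∈ F, ∑ l ∈ F, ξ ω k * ξ ω l ∂μ = #F * σ ^ 2 := by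
    rw [integral_finsetSum _ fun k _ => integrable_finsetSum _ fun l _ => hint2 k l]
    simp_rw [integral_finsetSum _ fun l _ => hint2 _ l, hvar, sum_ite_eq]
    simp
  have hfirst : ∫ ω, 2 * (∑ k ∈ F, ξ ω k) * c ∂μ = 0 := by
    rw [integral_mul_const, integral_const_mul, integral_finsetSum _ fun k _ => hint1 k]
    simp [hmean]
  simp_rw [sub_sq, sq (∑ k ∈ F, _), sum_mul_sum]
  rw [integral_add ?_ (integrable_const _), integral_sub hsq hlin, hsecond, hfirst]
  · simp
  · exact hsq.sub hlin

end Noise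

section Risk

variable {m d : ℕ} {Ω : Type*} [MeasurableSpace Ω] {μ : Measure Ω} [IsProbabilityMeasure μ]
  {ξ : Ω → Fin (m * d) → ℝ} {σ : ℝ}

theorem Xstack_ridge_mspe (hm : 1 ≤ m)
    (hint1 : ∀ i, Integrable (fun ω => ξ ω i) μ)
    (hint2 : ∀ i j, Integrable (fun ω => ξ ω i * ξ ω j) μ)
    (hmean : ∀ i, ∫ ω, ξ ω i ∂μ = 0)
    (hvar : ∀ i j, (∫ ω, ξ ω i * ξ ω j ∂μ) = if i = j then σ ^ 2 else 0)
    (S : Finset (Fin (m * d))) (w : Fin d → ℝ) :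
    ∫ ω, (1 / ((m * d : ℕ) : ℝ)) * ∑ k, ((Xstack m d *ᵥ ((_root_.gram (Xstack m d) S + 1)⁻¹ *ᵥ
        ((rowSub (Xstack m d) S)ᵀ *ᵥ fun p : S => (Xstack m d *ᵥ w) p + ξ ω p))) k
        - (Xstack m d *ᵥ w) k) ^ 2 ∂μ
      = (1 / d) * ∑ i, (#(modFiber S i) * σ ^ 2 + w i ^ 2) / (#(modFiber S i) + 1) ^ 2 := by
  set err : Fin d → Ω → ℝ := fun i ω =>
    ((∑ l ∈ modFiber S i, ξ ω l - w i) / (#(modFiber S i) + 1)) ^ 2 with herr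
  have hint : ∀ i, Integrable (err i) μ := fun i => by
    simp_rw [herr, div_pow]
    exact (integrable_sum_sub_sq hint1 hint2 _ _).div_const _
  have hrisk : ∀ i, ∫ ω, err i ω ∂μ
      = (#(modFiber S i) * σ ^ 2 + w i ^ 2) / (#(modFiber S i) + 1) ^ 2 := fun i => by
    simp_rw [herr, div_pow]
    rw [integral_div, integral_sum_sub_sq hint1 hint2 hmean hvar]
  simp_rw [Xstack_ridge_error]
  rw [integral_congr_ae (ae_of_all _ fun ω => congrArg _ (Fin.sum_modNat fun i => err i ω)),
    integral_const_mul]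
  simp_rw [nsmul_eq_mul]
  rw [integral_const_mul, integral_finsetSum _ fun i _ => hint i]
  simp_rw [hrisk]
  have hm0 : (m : ℝ) ≠ 0 := Nat.cast_ne_zero.2 (Nat.one_le_iff_ne_zero.1 hm)
  rw [Nat.cast_mul, ← mul_assoc]
  congr 1
  field_simp

end Risk

theorem div_le_sum_inv_card_modFiber {m d : ℕ} (S : Finset (Fin (m * d))) (σ : ℝ) :
    σ ^ 2 * d / (#S + d) ≤ σ ^ 2 / d * ∑ i, 1 / ((#(modFiber S i) : ℝ) + 1) := by
  have hsedrakyan := sq_sum_div_le_sum_sq_div univ (fun _ => (1 : ℝ))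
    (g := fun i => (#(modFiber S i) : ℝ) + 1) fun i _ => by positivity
  have hsum : ∑ i, ((#(modFiber S i) : ℝ) + 1) = #S + d := by
    rw [sum_add_distrib, ← Nat.cast_sum, sum_card_modFiber]
    simp
  rw [hsum] at hsedrakyan
  simp only [sum_const, card_univ, Fintype.card_fin, nsmul_eq_mul, mul_one, one_pow]
    at hsedrakyan
  calc σ ^ 2 * d / (#S + d) = σ ^ 2 / d * (d ^ 2 / (#S + d)) := by
        rcases eq_or_ne (d : ℝ) 0 with hd | hd
        · simp [hd]
        · field_simp
    _ ≤ σ ^ 2 / d * ∑ i, 1 / ((#(modFiber S i) : ℝ) + 1) := by gcongr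

theorem ridge_mspe_lower_bound_general (m d : ℕ) (hm : 1 ≤ m) (σ : ℝ)
    {Ω : Type*} [MeasurableSpace Ω] (μ : Measure Ω) [IsProbabilityMeasure μ]
    (ξ : Ω → Fin (m * d) → ℝ)
    (hint1 : ∀ i, Integrable (fun ω => ξ ω i) μ)
    (hint2 : ∀ i j, Integrable (fun ω => ξ ω i * ξ ω j) μ)
    (hmean : ∀ i, ∫ ω, ξ ω i ∂μ = 0)
    (hvar : ∀ i j, (∫ ω, ξ ω i * ξ ω j ∂μ) = if i = j then σ ^ 2 else 0)
    (S : Finset (Fin (m * d))) :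
    (∫ ω, (1 / ((m * d : ℕ) : ℝ)) *
        ∑ k, ((Xstack m d).mulVec
            ((gram (Xstack m d) S + (1 : Matrix (Fin d) (Fin d) ℝ))⁻¹.mulVec
              ((rowSub (Xstack m d) S)ᵀ.mulVec
                (fun p : {x // x ∈ S} =>
                  (Xstack m d).mulVec (fun _ => σ) p.1 + ξ ω p.1))) k
          - (Xstack m d).mulVec (fun _ => σ) k) ^ 2 ∂μ)
      = (σ ^ 2 / d) * ∑ i : Fin d,
          1 / (((S.filter (fun k => k.val % d = i.val)).card : ℝ) + 1)
    ∧ (σ ^ 2 / d) * ∑ i : Fin d,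
          1 / (((S.filter (fun k => k.val % d = i.val)).card : ℝ) + 1)
        ≥ σ ^ 2 * d / ((S.card : ℝ) + d) := by
  refine ⟨?_, div_le_sum_inv_card_modFiber S σ⟩
  rw [Xstack_ridge_mspe hm hint1 hint2 hmean hvar S, mul_sum, mul_sum]
  refine sum_congr rfl fun i _ => ?_
  rw [modFiber]
  field_simp

/-- Lower bound construction: for `X` consisting of `m ≥ 1` stacked copies of the identity,
`w̃ = σ·1`, `y = Xw̃ + ξ` with `Var[ξ] = σ²I`, `λ = 1`, and any subset `S` of size `s`,
the ridge estimator satisfies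
`E_ξ[(1/n)‖X(w_λ*(S) − w̃)‖²] = (σ²/d) Σ_{i=1}^d 1/(s_i+1) ≥ σ²d/(s+d)`,
where `s_i` is the number of rows of `X_S` equal to `e_i`. -/
theorem ridge_mspe_lower_bound (m d : ℕ) (hm : 1 ≤ m) (hd : 1 ≤ d) (σ : ℝ) (hσ : 0 < σ)
    {Ω : Type*} [MeasurableSpace Ω] (μ : Measure Ω) [IsProbabilityMeasure μ]
    (ξ : Ω → Fin (m * d) → ℝ)
    (hint1 : ∀ i, Integrable (fun ω => ξ ω i) μ)
    (hint2 : ∀ i j, Integrable (fun ω => ξ ω i * ξ ω j) μ)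
    (hmean : ∀ i, ∫ ω, ξ ω i ∂μ = 0)
    (hvar : ∀ i j, (∫ ω, ξ ω i * ξ ω j ∂μ) = if i = j then σ ^ 2 else 0)
    (S : Finset (Fin (m * d))) :
    (∫ ω, (1 / ((m * d : ℕ) : ℝ)) *
        ∑ k, ((Xstack m d).mulVec
            ((gram (Xstack m d) S + (1 : Matrix (Fin d) (Fin d) ℝ))⁻¹.mulVec
              ((rowSub (Xstack m d) S)ᵀ.mulVec
                (fun p : {x // x ∈ S} =>
                  (Xstack m d).mulVec (fun _ => σ) p.1 + ξ ω p.1))) k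
          - (Xstack m d).mulVec (fun _ => σ) k) ^ 2 ∂μ)
      = (σ ^ 2 / d) * ∑ i : Fin d,
          1 / (((S.filter (fun k => k.val % d = i.val)).card : ℝ) + 1)
    ∧ (σ ^ 2 / d) * ∑ i : Fin d,
          1 / (((S.filter (fun k => k.val % d = i.val)).card : ℝ) + 1)
        ≥ σ ^ 2 * d / ((S.card : ℝ) + d) :=
  ridge_mspe_lower_bound_general m d hm σ μ ξ hint1 hint2 hmean hvar S
end
end
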